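/- Let α ≥ 0 be a real number. The function (u_1,…,u_m) ↦ (u_{k+1}⋯u_m)^{−α(m+1)/(m−k)} · (1+u_1+…+u_m)^{−(1−α)(m+1)} is Lebesgue-integrable on (0,∞)^m if and only if α < (m−k)/(m+1). -/
import Mathlib

open MeasureTheory Finset

lemma aux1 {a b : ℝ} (ha0 : 0 ≤ a) (ha1 : a < 1) (hab : 1 < a + b) :
    IntegrableOn (fun t : ℝ => t ^ (-a) * (1 + t) ^ (-b)) (Set.Ioi 0) := by
  have hb : 0 < b := by linarith
  have hmeas : Measurable fun t : ℝ => t ^ (-a) * (1 + t) ^ (-b) := by fun_prop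
  have h1 : IntegrableOn (fun t : ℝ => t ^ (-a) * (1 + t) ^ (-b)) (Set.Ioc 0 1) := by
    have hbd : IntegrableOn (fun t : ℝ => t ^ (-a)) (Set.Ioc 0 1) := by
      refine ((intervalIntegral.integrableOn_Ioo_rpow_iff (t := 2) two_pos).2
        (by linarith)).mono_set ?_
      intro x hx; exact ⟨hx.1, lt_of_le_of_lt hx.2 one_lt_two⟩
    refine hbd.mono' hmeas.aestronglyMeasurable.restrict ?_
    filter_upwards [ae_restrict_mem measurableSet_Ioc] with t ht
    have ht0 : 0 < t := ht.1
    rw [Real.norm_eq_abs, abs_mul, abs_of_nonneg (Real.rpow_nonneg ht0.le _),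
      abs_of_nonneg (Real.rpow_nonneg (by linarith) _)]
    calc t ^ (-a) * (1 + t) ^ (-b) ≤ t ^ (-a) * 1 := by
          have h1t : (1:ℝ) ≤ 1 + t := by linarith
          have := Real.rpow_le_one_of_one_le_of_nonpos h1t (by linarith : -b ≤ 0)
          exact mul_le_mul_of_nonneg_left this (Real.rpow_nonneg ht0.le _)
      _ = t ^ (-a) := mul_one _
  have h2 : IntegrableOn (fun t : ℝ => t ^ (-a) * (1 + t) ^ (-b)) (Set.Ioi 1) := by
    have hbd : IntegrableOn (fun t : ℝ => t ^ (-(a + b))) (Set.Ioi 1) :=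
      integrableOn_Ioi_rpow_of_lt (by linarith) one_pos
    refine hbd.mono' hmeas.aestronglyMeasurable.restrict ?_
    filter_upwards [ae_restrict_mem measurableSet_Ioi] with t ht
    have ht0 : (0:ℝ) < t := lt_trans one_pos ht
    rw [Real.norm_eq_abs, abs_mul, abs_of_nonneg (Real.rpow_nonneg ht0.le _),
      abs_of_nonneg (Real.rpow_nonneg (by linarith) _)]
    have h : (1 + t) ^ (-b) ≤ t ^ (-b) :=
      Real.rpow_le_rpow_of_nonpos ht0 (by linarith) (by linarith)
    calc t ^ (-a) * (1 + t) ^ (-b) ≤ t ^ (-a) * t ^ (-b) :=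
          mul_le_mul_of_nonneg_left h (Real.rpow_nonneg ht0.le _)
      _ = t ^ (-(a + b)) := by rw [← Real.rpow_add ht0]; ring_nf
  have hu : Set.Ioc (0:ℝ) 1 ∪ Set.Ioi 1 = Set.Ioi 0 := Set.Ioc_union_Ioi_eq_Ioi zero_le_one
  rw [← hu]
  exact h1.union h2

lemma aux2 {n : ℕ} (k₀ : Fin (n+1)) {p : ℝ} (hp : 1 ≤ p) {c : ℝ} (hc : 0 < c) :
    ¬ IntegrableOn (fun u : Fin (n+1) → ℝ => c * (u k₀) ^ (-p))
      (Set.univ.pi fun _ => Set.Ioo (0:ℝ) 1) := by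
  intro h
  set F : (Fin (n+1) → ℝ) → ℝ := fun u => c * (u k₀) ^ (-p) with hF
  set C : Set (Fin (n+1) → ℝ) := Set.univ.pi fun _ => Set.Ioo (0:ℝ) 1 with hC
  have hCmeas : MeasurableSet C := MeasurableSet.univ_pi fun _ => measurableSet_Ioo
  rw [← integrable_indicator_iff hCmeas] at h
  set G := C.indicator F with hG
  have mp := (measurePreserving_piFinSuccAbove (fun _ : Fin (n+1) => (volume : Measure ℝ)) k₀).symm
  rw [show (volume : Measure (Fin (n+1) → ℝ)) = Measure.pi fun _ => volume from volume_pi,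
    ← mp.integrable_comp_emb (MeasurableEquiv.measurableEmbedding _)] at h
  have hslice := h.prod_left_ae
  have hC' : (Measure.pi fun _ : Fin n => (volume : Measure ℝ))
      (Set.univ.pi fun _ => Set.Ioo (0:ℝ) 1) ≠ 0 := by
    rw [Measure.pi_pi]
    simp [Real.volume_Ioo]
  obtain ⟨y, hy, hyint⟩ := Measure.exists_mem_of_measure_ne_zero_of_ae hC'
    (ae_restrict_of_ae hslice)
  have hy' : ∀ j, y j ∈ Set.Ioo (0:ℝ) 1 := fun j => hy j (Set.mem_univ j)
  have key : (fun x : ℝ => (G ∘ (MeasurableEquiv.piFinSuccAbove (fun _ => ℝ) k₀).symm) (x, y))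
      = (Set.Ioo (0:ℝ) 1).indicator (fun x => c * x ^ (-p)) := by
    funext x
    have he : (MeasurableEquiv.piFinSuccAbove (fun _ : Fin (n+1) => ℝ) k₀).symm (x, y)
        = Fin.insertNth k₀ x y := by
      rw [MeasurableEquiv.piFinSuccAbove_symm_apply]
      rfl
    simp only [Function.comp_apply, he, hG]
    by_cases hx : x ∈ Set.Ioo (0:ℝ) 1
    · have hmem : Fin.insertNth k₀ x y ∈ C := by
        rw [hC, Set.mem_univ_pi]
        rw [Fin.forall_iff_succAbove k₀]
        refine ⟨by simpa using hx, fun j => by simpa using hy' j⟩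
      rw [Set.indicator_of_mem hmem, Set.indicator_of_mem hx, hF]
      simp
    · have hmem : Fin.insertNth k₀ x y ∉ C := by
        rw [hC, Set.mem_univ_pi]
        intro hall
        exact hx (by simpa using hall k₀)
      rw [Set.indicator_of_notMem hmem, Set.indicator_of_notMem hx]
  rw [key] at hyint
  rw [integrable_indicator_iff measurableSet_Ioo] at hyint
  have : IntegrableOn (fun x : ℝ => x ^ (-p)) (Set.Ioo 0 1) := by
    refine (hyint.const_mul c⁻¹).congr (Filter.Eventually.of_forall fun x => ?_)
    field_simp
  rw [intervalIntegral.integrableOn_Ioo_rpow_iff one_pos] at this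
  linarith

theorem stmt19 (m k : ℕ) (hm : 2 ≤ m) (hk : 1 ≤ k) (hkm : k ≤ m - 1)
    (α : ℝ) (hα : 0 ≤ α) :
    MeasureTheory.IntegrableOn
      (fun u : Fin m → ℝ =>
        (∏ i ∈ Finset.univ.filter (fun i : Fin m => k ≤ (i : ℕ)), u i) ^
            (-(α * ((m : ℝ) + 1) / ((m : ℝ) - (k : ℝ)))) *
          (1 + ∑ i, u i) ^ (-((1 - α) * ((m : ℝ) + 1))))
      {u : Fin m → ℝ | ∀ i, 0 < u i} ↔
    α < ((m : ℝ) - (k : ℝ)) / ((m : ℝ) + 1) := by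
  have hkm' : k < m := by omega
  have hMK : 0 < (m : ℝ) - (k : ℝ) := by
    have : (k:ℝ) < (m:ℝ) := by exact_mod_cast hkm'
    linarith
  have hM0 : (0:ℝ) < (m : ℝ) := by
    have : (0:ℕ) < m := by omega
    exact_mod_cast this
  have hM1 : (0:ℝ) < (m : ℝ) + 1 := by linarith
  set p : ℝ := α * ((m : ℝ) + 1) / ((m : ℝ) - (k : ℝ)) with hpdef
  set q : ℝ := (1 - α) * ((m : ℝ) + 1) with hqdef
  have hp0 : 0 ≤ p := div_nonneg (mul_nonneg hα hM1.le) hMK.le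
  have hpq : p * ((m:ℝ) - (k:ℝ)) = α * ((m:ℝ) + 1) := by
    rw [hpdef]; field_simp
  have hiff : (α < ((m : ℝ) - (k : ℝ)) / ((m : ℝ) + 1)) ↔ p < 1 := by
    rw [hpdef, div_lt_one hMK, lt_div_iff₀ hM1]
  have hS : MeasurableSet {u : Fin m → ℝ | ∀ i, 0 < u i} := by
    have : {u : Fin m → ℝ | ∀ i, 0 < u i} = ⋂ i, {u | 0 < u i} := by
      ext u; simp [Set.mem_iInter]
    rw [this]
    exact MeasurableSet.iInter fun i => measurableSet_lt measurable_const (measurable_pi_apply i)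
  rw [hiff]
  constructor
  · -- integrable → p < 1
    intro hint
    by_contra hge
    push_neg at hge
    set c : ℝ := min ((1 + (m:ℝ)) ^ (-q)) 1 with hcdef
    have hc : 0 < c := lt_min (Real.rpow_pos_of_pos (by linarith) _) one_pos
    obtain ⟨n, rfl⟩ : ∃ n, m = n + 1 := ⟨m - 1, by omega⟩
    refine aux2 (⟨k, hkm'⟩ : Fin (n+1)) hge hc ?_
    have hsub : (Set.univ.pi fun _ : Fin (n+1) => Set.Ioo (0:ℝ) 1)
        ⊆ {u : Fin (n+1) → ℝ | ∀ i, 0 < u i} :=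
      fun u hu i => (hu i (Set.mem_univ i)).1
    have hmeas : Measurable fun u : Fin (n+1) → ℝ => c * (u ⟨k, hkm'⟩) ^ (-p) := by fun_prop
    refine (hint.mono_set hsub).mono' hmeas.aestronglyMeasurable.restrict ?_
    filter_upwards [ae_restrict_mem (MeasurableSet.univ_pi fun _ => measurableSet_Ioo)]
      with u hu
    have hui : ∀ i, 0 < u i ∧ u i < 1 := fun i =>
      ⟨(hu i (Set.mem_univ i)).1, (hu i (Set.mem_univ i)).2⟩
    have hu0 : 0 < u ⟨k, hkm'⟩ := (hui _).1
    rw [Real.norm_eq_abs, abs_of_nonneg (mul_nonneg hc.le (Real.rpow_nonneg hu0.le _))]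
    have hmem : (⟨k, hkm'⟩ : Fin (n+1)) ∈
        Finset.univ.filter (fun i : Fin (n+1) => k ≤ (i : ℕ)) := by
      simp
    have hprodpos : 0 < ∏ i ∈ Finset.univ.filter (fun i : Fin (n+1) => k ≤ (i : ℕ)), u i :=
      Finset.prod_pos fun i _ => (hui i).1
    have hle : ∏ i ∈ Finset.univ.filter (fun i : Fin (n+1) => k ≤ (i : ℕ)), u i
        ≤ u ⟨k, hkm'⟩ := by
      rw [← Finset.mul_prod_erase _ _ hmem]
      have h1 : ∏ i ∈ (Finset.univ.filter (fun i : Fin (n+1) => k ≤ (i : ℕ))).erase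
          ⟨k, hkm'⟩, u i ≤ 1 :=
        Finset.prod_le_one (fun i _ => (hui i).1.le) (fun i _ => (hui i).2.le)
      calc u ⟨k, hkm'⟩ * ∏ i ∈ (Finset.univ.filter
            (fun i : Fin (n+1) => k ≤ (i : ℕ))).erase ⟨k, hkm'⟩, u i
          ≤ u ⟨k, hkm'⟩ * 1 := mul_le_mul_of_nonneg_left h1 hu0.le
        _ = u ⟨k, hkm'⟩ := mul_one _
    have h1 : (u ⟨k, hkm'⟩) ^ (-p) ≤
        (∏ i ∈ Finset.univ.filter (fun i : Fin (n+1) => k ≤ (i : ℕ)), u i) ^ (-p) :=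
      Real.rpow_le_rpow_of_nonpos hprodpos hle (neg_nonpos.2 hp0)
    have hsum0 : 0 ≤ ∑ i, u i := Finset.sum_nonneg fun i _ => (hui i).1.le
    have hsumle : ∑ i, u i ≤ ((n:ℝ)+1) := by
      calc ∑ i, u i ≤ ∑ _i : Fin (n+1), (1:ℝ) :=
            Finset.sum_le_sum fun i _ => (hui i).2.le
        _ = ((n:ℝ)+1) := by simp
    have h2 : c ≤ (1 + ∑ i, u i) ^ (-q) := by
      rcases le_or_gt 0 q with hq0 | hq0
      · refine (min_le_left _ _).trans ?_
        refine Real.rpow_le_rpow_of_nonpos (by linarith) ?_ (neg_nonpos.2 hq0)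
        push_cast
        linarith
      · refine (min_le_right _ _).trans ?_
        calc (1:ℝ) = (1 + ∑ i, u i) ^ (0:ℝ) := (Real.rpow_zero _).symm
          _ ≤ (1 + ∑ i, u i) ^ (-q) :=
            Real.rpow_le_rpow_of_exponent_le (by linarith) (by linarith)
    calc c * (u ⟨k, hkm'⟩) ^ (-p)
        ≤ ((1 + ∑ i, u i) ^ (-q)) *
          ((∏ i ∈ Finset.univ.filter (fun i : Fin (n+1) => k ≤ (i : ℕ)), u i) ^ (-p)) :=
          mul_le_mul h2 h1 (Real.rpow_nonneg hu0.le _) (Real.rpow_nonneg (by linarith) _)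
      _ = _ := mul_comm _ _
  · -- p < 1 → integrable
    intro hp1
    set P : Fin m → ℝ := fun i => if k ≤ (i:ℕ) then p else 0 with hPdef
    set Q : Fin m → ℝ := fun i => 1 - P i + 1/(m:ℝ) with hQdef
    have hP0 : ∀ i, 0 ≤ P i := by
      intro i; rw [hPdef]; dsimp only; split <;> simp [hp0]
    have hP1 : ∀ i, P i < 1 := by
      intro i; rw [hPdef]; dsimp only; split <;> simp [hp1]
    have hQ0 : ∀ i, 0 ≤ Q i := by
      intro i
      have := hP1 i
      have hm' : 0 < 1/(m:ℝ) := by positivity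
      rw [hQdef]; dsimp only; linarith
    have hPQ : ∀ i, 1 < P i + Q i := by
      intro i
      have hm' : 0 < 1/(m:ℝ) := by positivity
      rw [hQdef]; dsimp only; linarith
    set g : Fin m → ℝ → ℝ :=
      fun i => (Set.Ioi 0).indicator (fun t => t ^ (-(P i)) * (1+t) ^ (-(Q i))) with hgdef
    have hgint : ∀ i, Integrable (g i) volume := fun i =>
      (integrable_indicator_iff measurableSet_Ioi).2 (aux1 (hP0 i) (hP1 i) (hPQ i))
    have hprod : Integrable (fun u : Fin m → ℝ => ∏ i, g i (u i)) volume :=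
      Integrable.fin_nat_prod hgint
    have hg0 : ∀ i t, 0 ≤ g i t := by
      intro i t
      rw [hgdef]; dsimp only
      by_cases h : t ∈ Set.Ioi (0:ℝ)
      · rw [Set.indicator_of_mem h]
        have ht : (0:ℝ) < t := h
        exact mul_nonneg (Real.rpow_nonneg ht.le _) (Real.rpow_nonneg (by linarith) _)
      · rw [Set.indicator_of_notMem h]
    have hfmeas : Measurable (fun u : Fin m → ℝ =>
        (∏ i ∈ Finset.univ.filter (fun i : Fin m => k ≤ (i : ℕ)), u i) ^ (-p) *
          (1 + ∑ i, u i) ^ (-q)) := by fun_prop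
    rw [← integrable_indicator_iff hS]
    refine hprod.mono' (hfmeas.indicator hS).aestronglyMeasurable
      (Filter.Eventually.of_forall fun u => ?_)
    by_cases hu : u ∈ {u : Fin m → ℝ | ∀ i, 0 < u i}
    · rw [Set.indicator_of_mem hu]
      have hupos : ∀ i, 0 < u i := hu
      have hsum0 : 0 ≤ ∑ i, u i := Finset.sum_nonneg fun i _ => (hupos i).le
      have hs0 : (0:ℝ) < 1 + ∑ i, u i := by linarith
      have hprodnn : 0 ≤ ∏ i ∈ Finset.univ.filter (fun i : Fin m => k ≤ (i : ℕ)), u i :=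
        Finset.prod_nonneg fun i _ => (hupos i).le
      rw [Real.norm_eq_abs, abs_of_nonneg
        (mul_nonneg (Real.rpow_nonneg hprodnn _) (Real.rpow_nonneg hs0.le _))]
      have hA : (∏ i ∈ Finset.univ.filter (fun i : Fin m => k ≤ (i : ℕ)), u i) ^ (-p)
          = ∏ i, (u i) ^ (-(P i)) := by
        rw [← Real.finset_prod_rpow _ _ (fun i _ => (hupos i).le) (-p),
          Finset.prod_filter]
        refine Finset.prod_congr rfl fun i _ => ?_
        rw [hPdef]; dsimp only
        split
        · rfl
        · rw [neg_zero, Real.rpow_zero]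
      have hsumQ : ∑ i, Q i = q := by
        have hcard : (Finset.univ.filter (fun i : Fin m => k ≤ (i : ℕ))).card = m - k := by
          rw [Finset.card_filter]
          rw [Fin.sum_univ_eq_sum_range (fun j => if k ≤ j then 1 else 0)]
          rw [← Finset.card_filter]
          have : (Finset.range m).filter (fun j => k ≤ j) = Finset.Ico k m := by
            ext j; simp [Finset.mem_Ico, Finset.mem_range, and_comm]
          rw [this, Nat.card_Ico]
        have hsumP : ∑ i, P i = ((m:ℝ) - (k:ℝ)) * p := by
          rw [hPdef]
          rw [← Finset.sum_filter, Finset.sum_const, hcard, nsmul_eq_mul]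
          have : ((m - k : ℕ) : ℝ) = (m:ℝ) - (k:ℝ) := by
            push_cast [Nat.cast_sub hkm'.le]
            ring
          rw [this]
        rw [hQdef]
        dsimp only
        rw [Finset.sum_add_distrib, Finset.sum_sub_distrib, Finset.sum_const,
          Finset.sum_const, Finset.card_univ, Fintype.card_fin, hsumP]
        rw [nsmul_eq_mul, nsmul_eq_mul]
        have hminv : (m:ℝ) * (1/(m:ℝ)) = 1 := by
          field_simp
        rw [hminv, hqdef]
        linear_combination -hpq
      have hB : (1 + ∑ i, u i) ^ (-q) ≤ ∏ i, (1 + u i) ^ (-(Q i)) := by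
        rw [← hsumQ, ← Finset.sum_neg_distrib, Real.rpow_sum_of_pos hs0]
        refine Finset.prod_le_prod (fun i _ => Real.rpow_nonneg hs0.le _) fun i _ => ?_
        refine Real.rpow_le_rpow_of_nonpos (by linarith [(hupos i).le]) ?_
          (neg_nonpos.2 (hQ0 i))
        have : u i ≤ ∑ j, u j :=
          Finset.single_le_sum (fun j _ => (hupos j).le) (Finset.mem_univ i)
        linarith
      have hgval : ∀ i, g i (u i) = (u i) ^ (-(P i)) * (1 + u i) ^ (-(Q i)) := fun i =>
        Set.indicator_of_mem (hupos i) _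
      calc (∏ i ∈ Finset.univ.filter (fun i : Fin m => k ≤ (i : ℕ)), u i) ^ (-p) *
            (1 + ∑ i, u i) ^ (-q)
          ≤ (∏ i, (u i) ^ (-(P i))) * ∏ i, (1 + u i) ^ (-(Q i)) := by
            rw [hA]
            exact mul_le_mul_of_nonneg_left hB
              (Finset.prod_nonneg fun i _ => Real.rpow_nonneg (hupos i).le _)
        _ = ∏ i, g i (u i) := by
            rw [← Finset.prod_mul_distrib]
            exact Finset.prod_congr rfl fun i _ => (hgval i).symm
    · rw [Set.indicator_of_notMem hu]
      simpa using Finset.prod_nonneg fun i _ => hg0 i (u i)
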